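/- arXiv:1311.7563 — 4 statements merged into one kernel-verified Lean document; each statement's English description precedes it below -/
import Mathlib

section
/- In Λ_{1,7} with k = -3e_0 + e_1 + ... + e_7, an element e is called exceptional if e·e = -1 and e·k = -1. There are exactly 56 exceptional elements in Λ_{1,7}. -/
/-!
Write `e = (a; b)` with `b ∈ ℤ⁷`. Being exceptional means `∑ bᵢ = 1 - 3a` and `∑ bᵢ² = a² + 1`,
so the variance identity `∑ (7bᵢ - ∑ bⱼ)² = 7 (7 ∑ bᵢ² - (∑ bᵢ)²) = 14 (3 + 3a - a²)` forces
`0 ≤ a ≤ 3` and confines every `bᵢ` to two consecutive integers `c, c + 1`. Then `b` is determined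
by the set of coordinates equal to `c + 1`, whose size is fixed by `∑ bᵢ`; the four values of `a`
contribute `C(7,1) + C(7,5) + C(7,2) + C(7,6) = 7 + 21 + 21 + 7` exceptional elements.
-/

/-- The inner product of Λ_{1,7}. -/
def lambdaForm (x y : Fin 8 → ℤ) : ℤ := 2 * x 0 * y 0 - ∑ i, x i * y i

/-- k = -3e_0 + e_1 + ... + e_7 -/
def kvec : Fin 8 → ℤ := fun i => if i = 0 then -3 else 1

open Finset

section

variable {ι R : Type*} [Fintype ι]

theorem sum_sq_card_mul_sub_sum [CommRing R] (b : ι → R) :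
    ∑ i, (Fintype.card ι * b i - ∑ j, b j) ^ 2 =
      Fintype.card ι * (Fintype.card ι * ∑ i, b i ^ 2 - (∑ i, b i) ^ 2) := by
  simp only [sub_sq, mul_pow, sum_add_distrib, sum_sub_distrib, ← mul_sum, ← sum_mul,
    sum_const, card_univ, nsmul_eq_mul]
  ring

theorem sq_card_mul_sub_sum_le [CommRing R] [LinearOrder R] [IsStrictOrderedRing R]
    (b : ι → R) (i : ι) :
    (Fintype.card ι * b i - ∑ j, b j) ^ 2 ≤
      Fintype.card ι * (Fintype.card ι * ∑ i, b i ^ 2 - (∑ i, b i) ^ 2) := by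
  rw [← sum_sq_card_mul_sub_sum]
  exact single_le_sum (f := fun j => (Fintype.card ι * b j - ∑ k, b k) ^ 2)
    (fun j _ => sq_nonneg _) (mem_univ i)

theorem sum_const_add_ite_mem [DecidableEq ι] [CommRing R] (c : R) (S : Finset ι) :
    ∑ i, (c + if i ∈ S then 1 else 0) = Fintype.card ι * c + #S := by
  simp [sum_add_distrib]

theorem sum_sq_const_add_ite_mem [DecidableEq ι] [CommRing R] (c : R) (S : Finset ι) :
    ∑ i, (c + if i ∈ S then 1 else 0) ^ 2 = Fintype.card ι * c ^ 2 + (2 * c + 1) * #S := by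
  have h (i : ι) :
      (c + if i ∈ S then (1 : R) else 0) ^ 2 = c ^ 2 + (2 * c + 1) * if i ∈ S then 1 else 0 := by
    split_ifs <;> ring
  simp only [h, sum_add_distrib, ← mul_sum, sum_boole, sum_const, card_univ, nsmul_eq_mul,
    filter_mem_eq_inter, univ_inter]

theorem exists_eq_const_add_ite_mem [DecidableEq ι] [CommRing R] {b : ι → R} {c : R}
    (hb : ∀ i, b i = c ∨ b i = c + 1) :
    ∃ S : Finset ι, b = fun i => c + if i ∈ S then 1 else 0 := by
  classical
  refine ⟨univ.filter fun j => b j = c + 1, funext fun i => ?_⟩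
  rcases hb i with h | h <;> simp [h]

end

theorem lambdaForm_eq (x y : Fin 8 → ℤ) :
    lambdaForm x y = x 0 * y 0 - ∑ i : Fin 7, x i.succ * y i.succ := by
  simp only [lambdaForm, Fin.sum_univ_succ]
  ring

theorem lambdaForm_kvec (x : Fin 8 → ℤ) :
    lambdaForm x kvec = -3 * x 0 - ∑ i : Fin 7, x i.succ := by
  simp [lambdaForm_eq, kvec, Fin.succ_ne_zero, mul_comm]

theorem exceptional_iff (e : Fin 8 → ℤ) :
    lambdaForm e e = -1 ∧ lambdaForm e kvec = -1 ↔
      ∑ i : Fin 7, e i.succ ^ 2 = e 0 ^ 2 + 1 ∧ ∑ i : Fin 7, e i.succ = 1 - 3 * e 0 := by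
  rw [lambdaForm_kvec, lambdaForm_eq]
  simp only [← sq]
  constructor <;> rintro ⟨h₁, h₂⟩ <;> constructor <;> linarith

/- If `e` is exceptional with `e 0 = t`, its other coordinates take the values `baseValue t` and
`baseValue t + 1`, the latter exactly `upperCount t` times. -/
def baseValue : Fin 4 → ℤ := ![0, -1, -1, -2]

def upperCount : Fin 4 → ℕ := ![1, 5, 2, 6]

theorem sum_baseValue_upperCount (t : Fin 4) :
    7 * baseValue t + upperCount t = 1 - 3 * ((t : ℕ) : ℤ) := by
  fin_cases t <;> rfl

theorem sum_sq_baseValue_upperCount (t : Fin 4) :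
    7 * baseValue t ^ 2 + (2 * baseValue t + 1) * upperCount t = ((t : ℕ) : ℤ) ^ 2 + 1 := by
  fin_cases t <;> rfl

def exceptionalOfSubset (p : Σ _ : Fin 4, Finset (Fin 7)) : Fin 8 → ℤ :=
  Fin.cons ((p.1 : ℕ) : ℤ) fun i => baseValue p.1 + if i ∈ p.2 then 1 else 0

theorem exists_baseValue_of_exceptional {a : ℤ} {b : Fin 7 → ℤ}
    (hsq : ∑ i, b i ^ 2 = a ^ 2 + 1) (hsum : ∑ i, b i = 1 - 3 * a) :
    ∃ t : Fin 4, a = (t : ℕ) ∧ ∀ i, b i = baseValue t ∨ b i = baseValue t + 1 := by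
  have key : ∀ i, (7 * b i - (1 - 3 * a)) ^ 2 ≤ 14 * (3 + 3 * a - a ^ 2) := by
    intro i
    have := sq_card_mul_sub_sum_le b i
    simp only [Fintype.card_fin, hsq, hsum] at this
    push_cast at this
    linarith
  have hb : ∀ i (n : ℤ), 14 * (3 + 3 * a - a ^ 2) < n ^ 2 → 0 ≤ n →
      -n < 7 * b i - (1 - 3 * a) ∧ 7 * b i - (1 - 3 * a) < n :=
    fun i n hn h0 => abs_lt_of_sq_lt_sq' ((key i).trans_lt hn) h0
  have h0 : 0 ≤ a := by nlinarith [key 0, sq_nonneg (7 * b 0 - (1 - 3 * a))]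
  have h3 : a ≤ 3 := by nlinarith [key 0, sq_nonneg (7 * b 0 - (1 - 3 * a))]
  interval_cases a
  · refine ⟨0, rfl, fun i => ?_⟩
    have := hb i 7 (by norm_num) (by norm_num)
    simp only [baseValue, Matrix.cons_val]; omega
  · refine ⟨1, rfl, fun i => ?_⟩
    have := hb i 9 (by norm_num) (by norm_num)
    simp only [baseValue, Matrix.cons_val]; omega
  · refine ⟨2, rfl, fun i => ?_⟩
    have := hb i 9 (by norm_num) (by norm_num)
    simp only [baseValue, Matrix.cons_val]; omega
  · refine ⟨3, rfl, fun i => ?_⟩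
    have := hb i 7 (by norm_num) (by norm_num)
    simp only [baseValue, Matrix.cons_val]; omega

theorem exceptionalOfSubset_injective : Function.Injective exceptionalOfSubset := by
  rintro ⟨t, S⟩ ⟨t', S'⟩ h
  have ht : t = t' := by
    have := congrFun h 0
    simp only [exceptionalOfSubset, Fin.cons_zero, Nat.cast_inj] at this
    exact Fin.ext this
  subst ht
  congr
  ext i
  have := congrFun h i.succ
  simp only [exceptionalOfSubset, Fin.cons_succ, add_right_inj] at this
  split_ifs at this <;> simp_all

theorem exceptional_eq_image :
    {e : Fin 8 → ℤ | lambdaForm e e = -1 ∧ lambdaForm e kvec = -1} =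
      exceptionalOfSubset ''
        ↑(univ.sigma fun t => powersetCard (upperCount t) (univ : Finset (Fin 7))) := by
  ext e
  simp only [Set.mem_ofPred_eq, exceptional_iff, Set.mem_image, mem_coe, mem_sigma, mem_univ,
    mem_powersetCard, subset_univ, true_and]
  constructor
  · rintro ⟨hsq, hsum⟩
    obtain ⟨t, ht, hb⟩ := exists_baseValue_of_exceptional hsq hsum
    obtain ⟨S, hS⟩ := exists_eq_const_add_ite_mem hb
    refine ⟨⟨t, S⟩, ?_, ?_⟩
    · show #S = upperCount t
      have hcard := sum_const_add_ite_mem (baseValue t) S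
      rw [← hS, hsum, ht, Fintype.card_fin, Nat.cast_ofNat] at hcard
      have := sum_baseValue_upperCount t
      omega
    · rw [← Fin.cons_self_tail e, exceptionalOfSubset, ht]
      exact congrArg _ hS.symm
  · rintro ⟨⟨t, S⟩, hS, rfl⟩
    simp only [exceptionalOfSubset, Fin.cons_zero, Fin.cons_succ, sum_sq_const_add_ite_mem,
      sum_const_add_ite_mem, Fintype.card_fin, Nat.cast_ofNat, hS]
    exact ⟨sum_sq_baseValue_upperCount t, sum_baseValue_upperCount t⟩

/-- there are exactly 56 exceptional elements in Λ_{1,7},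
i.e. elements e with e·e = -1 and e·k = -1. -/
theorem card_exceptional :
    {e : Fin 8 → ℤ | lambdaForm e e = -1 ∧ lambdaForm e kvec = -1}.ncard = 56 := by
  rw [exceptional_eq_image, Set.ncard_image_of_injective _ exceptionalOfSubset_injective,
    Set.ncard_coe_finset, card_sigma]
  simp [upperCount, Fin.sum_univ_four, Nat.choose]
end

section
/- Let G be a group acting on a set X, and let Ā ⊆ X be a strict fundamental domain for a normal subgroup N ⊴ G (each N-orbit meets Ā exactly once). If g ∈ G preserves Ā setwise modulo N in the sense that G = N ⋊ H with H·Ā = Ā, then for x ∈ Ā, Stab_G(x) = Stab_N(x) ⋊ Stab_H(x). -/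
theorem stabilizer_semidirect_general {G X : Type*} [Group G] [MulAction G X]
    (N H : Subgroup G)
    (hprod : ∀ g : G, ∃ n ∈ N, ∃ h ∈ H, g = n * h)
    (A : Set X)
    (hstrict : ∀ a ∈ A, ∀ b ∈ A, ∀ n ∈ N, n • a = b → a = b)
    (hH : ∀ h ∈ H, ∀ a ∈ A, h • a ∈ A)
    (x : X) (hx : x ∈ A) (g : G) (hg : g • x = x) :
    ∃ n ∈ N, ∃ h ∈ H, g = n * h ∧ n • x = x ∧ h • x = x := by
  obtain ⟨n, hn, h, hh, rfl⟩ := hprod g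
  -- `h • x` and `x` both lie in `A` and `n` carries one to the other, so they coincide.
  have hhx : h • x = x := hstrict _ (hH h hh x hx) _ hx n hn (by rwa [← mul_smul])
  have hnx : n • x = x := by rwa [mul_smul, hhx] at hg
  exact ⟨n, hn, h, hh, rfl, hnx, hhx⟩

/-- let G = N ⋊ H act on X, with A ⊆ X a strict fundamental
domain for the normal subgroup N, preserved by H. Then the stabilizer of
x ∈ A in G is the semidirect product of its stabilizers in N and H: every
g fixing x factors as g = n·h with n ∈ N, h ∈ H both fixing x. -/
theorem stabilizer_semidirect {G X : Type*} [Group G] [MulAction G X]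
    (N H : Subgroup G) [N.Normal]
    (hprod : ∀ g : G, ∃ n ∈ N, ∃ h ∈ H, g = n * h)
    (A : Set X)
    (hstrict : ∀ a ∈ A, ∀ b ∈ A, ∀ n ∈ N, n • a = b → a = b)
    (hH : ∀ h ∈ H, ∀ a ∈ A, h • a ∈ A)
    (x : X) (hx : x ∈ A) (g : G) (hg : g • x = x) :
    ∃ n ∈ N, ∃ h ∈ H, g = n * h ∧ n • x = x ∧ h • x = x :=
  stabilizer_semidirect_general N H hprod A hstrict hH x hx g hg
end

section
/- For the root system of type A_n with Weyl group W = S_{n+1} acting on the weight lattice P, the number of orbits of W on P/2P equals n/2 + 1 if n is even, and (n+1)/2 + 1 if n is odd. Representatives are given by 0, ϖ_1, ..., ϖ_{⌊(n+1)/2⌋}. -/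
/-- The weight lattice of A_n modulo 2 is F₂^{n+1} modulo the all-ones vector;
two classes are in the same W = S_{n+1} orbit iff related by a permutation up
to adding the all-ones vector. -/
def AnRel (n : ℕ) (x y : Fin (n + 1) → ZMod 2) : Prop :=
  ∃ σ : Equiv.Perm (Fin (n + 1)), x ∘ σ = y ∨ x ∘ σ = y + (fun _ => 1)

/-- The image of the fundamental weight ϖ_i in P/2P (with ϖ_0 = 0):
the vector with i ones. -/
def fundClass (n : ℕ) (i : ℕ) : Fin (n + 1) → ZMod 2 :=
  fun j => if (j : ℕ) < i then 1 else 0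


/-! The Weyl group permutes the coordinates of `F₂^{n+1}`, and `P/2P` is `F₂^{n+1}` modulo the
all-ones vector. A vector is determined up to permutation by its number `k` of ones, and adding
the all-ones vector replaces `k` by `n + 1 - k`; so the orbits on `P/2P` are classified by
`min k (n + 1 - k) ∈ {0, …, ⌊(n + 1)/2⌋}`, and `ϖ_i`, having `i` ones, has invariant `i`. -/

theorem exists_perm_comp_eq_of_card_fiber_eq {α γ : Type*} [Fintype α] [DecidableEq γ]
    {f g : α → γ} (h : ∀ c, Fintype.card {a // f a = c} = Fintype.card {a // g a = c}) :
    ∃ σ : Equiv.Perm α, g ∘ σ = f :=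
  ⟨Equiv.ofFiberEquiv fun c => Fintype.equivOfCardEq (h c), funext (Equiv.ofFiberEquiv_map _)⟩

section ZModTwoVectors

variable {ι : Type*} [Fintype ι]

theorem hammingNorm_comp_perm {β : Type*} [Zero β] [DecidableEq β] (x : ι → β)
    (σ : Equiv.Perm ι) : hammingNorm (x ∘ σ) = hammingNorm x :=
  Finset.card_equiv σ (by simp)

theorem ZMod.two_ne_zero_iff_eq_one {a : ZMod 2} : a ≠ 0 ↔ a = 1 :=
  ⟨Fin.eq_one_of_ne_zero a, fun h => h ▸ one_ne_zero⟩

theorem card_fiber_one_eq_hammingNorm (x : ι → ZMod 2) :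
    Fintype.card {i // x i = 1} = hammingNorm x := by
  simp only [hammingNorm, ZMod.two_ne_zero_iff_eq_one, Fintype.card_subtype]

theorem card_fiber_zero_eq_card_sub_hammingNorm (x : ι → ZMod 2) :
    Fintype.card {i // x i = 0} = Fintype.card ι - hammingNorm x := by
  rw [← card_fiber_one_eq_hammingNorm, ← Fintype.card_subtype_compl]
  simp only [← ZMod.two_ne_zero_iff_eq_one, not_not]

theorem hammingNorm_add_one (x : ι → ZMod 2) :
    hammingNorm (x + fun _ => 1) = Fintype.card ι - hammingNorm x := by
  rw [← card_fiber_zero_eq_card_sub_hammingNorm, ← card_fiber_one_eq_hammingNorm]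
  exact Fintype.card_congr
    (Equiv.subtypeEquivRight fun i => by simp only [Pi.add_apply, add_eq_right])

theorem exists_perm_comp_eq_of_hammingNorm_eq {x y : ι → ZMod 2}
    (h : hammingNorm x = hammingNorm y) : ∃ σ : Equiv.Perm ι, x ∘ σ = y := by
  refine exists_perm_comp_eq_of_card_fiber_eq fun c => ?_
  by_cases hc : c = 0
  · rw [hc, card_fiber_zero_eq_card_sub_hammingNorm, card_fiber_zero_eq_card_sub_hammingNorm, h]
  · rw [ZMod.two_ne_zero_iff_eq_one.1 hc, card_fiber_one_eq_hammingNorm,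
      card_fiber_one_eq_hammingNorm, h]

end ZModTwoVectors

def anOrbitIndex (n : ℕ) (x : Fin (n + 1) → ZMod 2) : ℕ :=
  min (hammingNorm x) (n + 1 - hammingNorm x)

section AnOrbitIndex

variable {n : ℕ}

theorem hammingNorm_le_succ {β : Type*} [Zero β] [DecidableEq β] (x : Fin (n + 1) → β) :
    hammingNorm x ≤ n + 1 := by
  simpa using hammingNorm_le_card_fintype (x := x)

theorem anOrbitIndex_le_half (x : Fin (n + 1) → ZMod 2) : anOrbitIndex n x ≤ (n + 1) / 2 := by
  unfold anOrbitIndex; omega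

theorem anOrbitIndex_comp_perm (x : Fin (n + 1) → ZMod 2) (σ : Equiv.Perm (Fin (n + 1))) :
    anOrbitIndex n (x ∘ σ) = anOrbitIndex n x := by
  rw [anOrbitIndex, anOrbitIndex, hammingNorm_comp_perm]

theorem anOrbitIndex_add_one (x : Fin (n + 1) → ZMod 2) :
    anOrbitIndex n (x + fun _ => 1) = anOrbitIndex n x := by
  have := hammingNorm_le_succ x
  rw [anOrbitIndex, anOrbitIndex, hammingNorm_add_one, Fintype.card_fin]
  omega

theorem anRel_iff_anOrbitIndex_eq {x y : Fin (n + 1) → ZMod 2} :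
    AnRel n x y ↔ anOrbitIndex n x = anOrbitIndex n y := by
  constructor
  · rintro ⟨σ, h | h⟩
    · rw [← h, anOrbitIndex_comp_perm]
    · rw [← anOrbitIndex_comp_perm x σ, h, anOrbitIndex_add_one]
  · intro h
    have hx := hammingNorm_le_succ x
    have hy := hammingNorm_le_succ y
    have hy' := hammingNorm_add_one y
    rw [Fintype.card_fin] at hy'
    unfold anOrbitIndex at h
    obtain hxy | hxy : hammingNorm x = hammingNorm y ∨
        hammingNorm x = hammingNorm (y + fun _ => 1) := by omega
    · exact (exists_perm_comp_eq_of_hammingNorm_eq hxy).imp fun _ => Or.inl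
    · exact (exists_perm_comp_eq_of_hammingNorm_eq hxy).imp fun _ => Or.inr

theorem hammingNorm_fundClass {i : ℕ} (hi : i ≤ n + 1) : hammingNorm (fundClass n i) = i := by
  have : ∀ j : Fin (n + 1), fundClass n i j ≠ 0 ↔ (j : ℕ) < i := fun j => by
    by_cases hj : (j : ℕ) < i <;> simp [fundClass, hj]
  simp only [hammingNorm, this, Fin.card_filter_val_lt]
  omega

theorem anOrbitIndex_fundClass {i : ℕ} (hi : i ≤ (n + 1) / 2) :
    anOrbitIndex n (fundClass n i) = i := by
  rw [anOrbitIndex, hammingNorm_fundClass (by omega)]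
  omega

end AnOrbitIndex

theorem bijective_quotMk_fundClass (n : ℕ) :
    Function.Bijective
      (fun i : Fin ((n + 1) / 2 + 1) => Quot.mk (AnRel n) (fundClass n i)) := by
  constructor
  · intro i j hij
    have := congrArg (Quot.lift (anOrbitIndex n) fun _ _ => anRel_iff_anOrbitIndex_eq.1) hij
    simp only [anOrbitIndex_fundClass (Nat.lt_succ_iff.1 i.2),
      anOrbitIndex_fundClass (Nat.lt_succ_iff.1 j.2)] at this
    exact Fin.ext this
  · rintro ⟨x⟩
    have hx := anOrbitIndex_le_half x
    refine ⟨⟨anOrbitIndex n x, Nat.lt_succ_of_le hx⟩, Quot.sound ?_⟩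
    rw [anRel_iff_anOrbitIndex_eq, anOrbitIndex_fundClass hx]

/-- for type A_n, the number of W-orbits on P/2P is n/2 + 1 if n
is even and (n+1)/2 + 1 if n is odd, with representatives 0, ϖ_1, ..., ϖ_{⌊(n+1)/2⌋}. -/
theorem An_orbits_on_P_mod_2P (n : ℕ) :
    Nat.card (Quot (AnRel n)) = (if Even n then n / 2 + 1 else (n + 1) / 2 + 1) ∧
    Function.Bijective
      (fun i : Fin ((n + 1) / 2 + 1) => Quot.mk (AnRel n) (fundClass n i)) := by
  refine ⟨?_, bijective_quotMk_fundClass n⟩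
  rw [← Nat.card_eq_of_bijective _ (bijective_quotMk_fundClass n), Nat.card_fin]
  split_ifs with hn
  · obtain ⟨k, rfl⟩ := hn
    omega
  · rfl
end

section
/- Consider the action of the Weyl group W of type E_7 on tuples in (R*)^7 generated by: (a) permutations of the coordinates, and (b) for each triple of indices i<j<k, the 'Cremona' move, which at the level of signs fixes the signs of t_i, t_j, t_k and flips the signs of the other four coordinates if and only if an odd number of t_i, t_j, t_k are negative. Recording only the pair (m_+, m_-) of numbers of positive and negative coordinates, this action on {(m_+, m_-) : m_+ + m_- = 7} has exactly 4 orbits: {(7,0)}, {(6,1),(2,5)}, {(5,2),(3,4),(1,6)}, {(4,3),(0,7)}. -/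
/-- One generating move on sign vectors in {±1}^7 (encoded as `Fin 7 → Bool`,
`true` = negative sign): either a permutation of the coordinates, or the
Cremona move centered at a 3-element subset S, which flips the signs of all
coordinates outside S exactly when the number of negative coordinates in S is
odd. -/
def cremonaStep (x y : Fin 7 → Bool) : Prop :=
  (∃ σ : Equiv.Perm (Fin 7), y = x ∘ σ) ∨
  (∃ S : Finset (Fin 7), S.card = 3 ∧
    y = fun j => if j ∈ S then x j
      else xor (x j) (decide ((S.filter (fun i => x i = true)).card % 2 = 1)))

/-- The number of negative coordinates of a sign vector. -/
def negCount (x : Fin 7 → Bool) : ℕ :=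
  (Finset.univ.filter (fun i => x i = true)).card

/-- The block of the partition {{0},{1,5},{2,4,6},{3,7}} containing m. -/
def block (m : ℕ) : ℕ :=
  if m = 0 then 0 else if m = 1 ∨ m = 5 then 1 else if m = 3 ∨ m = 7 then 3 else 2

lemma negCount_le (x : Fin 7 → Bool) : negCount x ≤ 7 := by
  have := Finset.card_filter_le (Finset.univ : Finset (Fin 7)) (fun i => x i = true)
  simpa [negCount] using this

lemma negCount_comp (x : Fin 7 → Bool) (σ : Equiv.Perm (Fin 7)) :
    negCount (x ∘ σ) = negCount x := by
  rw [negCount, negCount, ← Fintype.card_subtype, ← Fintype.card_subtype]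
  exact Fintype.card_congr (σ.subtypeEquiv (fun i => by simp))

lemma exists_perm (x y : Fin 7 → Bool) (h : negCount x = negCount y) :
    ∃ σ : Equiv.Perm (Fin 7), y = x ∘ σ := by
  have hcard : ∀ z : Fin 7 → Bool, negCount z = Fintype.card {i // z i = true} := by
    intro z; simp [negCount, Fintype.card_subtype]
  have h1 : Fintype.card {i // y i = true} = Fintype.card {i // x i = true} := by
    rw [← hcard, ← hcard, h]
  have h2 : Fintype.card {i // ¬ y i = true} = Fintype.card {i // ¬ x i = true} := by
    rw [Fintype.card_subtype_compl, Fintype.card_subtype_compl, h1]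
  have eB : {i // y i = true} ≃ {i // x i = true} := Fintype.equivOfCardEq h1
  have eC : {i // ¬ y i = true} ≃ {i // ¬ x i = true} := Fintype.equivOfCardEq h2
  refine ⟨(Equiv.sumCompl (fun i => y i = true)).symm.trans
    ((eB.sumCongr eC).trans (Equiv.sumCompl (fun i => x i = true))), ?_⟩
  funext i
  by_cases hi : y i = true
  · simp [Equiv.sumCompl_symm_apply_of_pos hi, (eB ⟨i, hi⟩).2, hi]
  · simp [Equiv.sumCompl_symm_apply_of_neg hi]
    have := (eC ⟨i, hi⟩).2
    simp at this hi
    simp [this, hi]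

/-- block of negCount is invariant under a single step. -/
lemma block_invariant {x y : Fin 7 → Bool} (h : cremonaStep x y) :
    block (negCount x) = block (negCount y) := by
  rcases h with ⟨σ, rfl⟩ | ⟨S, hS, rfl⟩
  · rw [negCount_comp]
  · by_cases hpar : (S.filter (fun i => x i = true)).card % 2 = 1
    · have hxy : (fun j => if j ∈ S then x j
          else xor (x j) (decide ((S.filter (fun i => x i = true)).card % 2 = 1)))
          = fun j => if j ∈ S then x j else !(x j) := by
        funext j; simp [hpar]
      rw [hxy]
      set a := (S.filter (fun i => x i = true)).card with ha
      set b := (Sᶜ.filter (fun i => x i = true)).card with hb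
      have hsplit : ∀ z : Fin 7 → Bool, negCount z
          = (S.filter (fun i => z i = true)).card + (Sᶜ.filter (fun i => z i = true)).card := by
        intro z
        rw [negCount, ← Finset.union_compl S, Finset.filter_union,
          Finset.card_union_of_disjoint]
        exact Finset.disjoint_filter_filter disjoint_compl_right
      have hx : negCount x = a + b := hsplit x
      set y : Fin 7 → Bool := fun j => if j ∈ S then x j else !(x j) with hy
      have h1 : (S.filter (fun i => y i = true)) = S.filter (fun i => x i = true) := by
        apply Finset.filter_congr
        intro j hj
        simp [hy, hj]
      have h2 : (Sᶜ.filter (fun i => y i = true)) = Sᶜ.filter (fun i => ¬ x i = true) := by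
        apply Finset.filter_congr
        intro j hj
        simp only [Finset.mem_compl] at hj
        simp [hy, hj]
      have hc : Sᶜ.card = 4 := by
        rw [Finset.card_compl, hS]; simp
      have h3 : b + (Sᶜ.filter (fun i => ¬ x i = true)).card = 4 := by
        have := Finset.card_filter_add_card_filter_not
          (s := Sᶜ) (p := fun i => x i = true)
        simpa [hc, ← hb] using this
      have hy2 : negCount y = a + (4 - b) := by
        rw [hsplit y, h1, h2, ← ha]
        omega
      have ha3 : a ≤ 3 := hS ▸ Finset.card_filter_le S _
      have hb4 : b ≤ 4 := hc ▸ Finset.card_filter_le Sᶜ _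
      rw [hx, hy2]
      interval_cases a <;> interval_cases b <;> first | omega | decide
    · have hxy : (fun j => if j ∈ S then x j
          else xor (x j) (decide ((S.filter (fun i => x i = true)).card % 2 = 1))) = x := by
        funext j; simp [hpar]
      rw [hxy]

def canon (m : ℕ) : Fin 7 → Bool := fun i => decide (i.val < m)

lemma negCount_canon (m : ℕ) (hm : m ≤ 7) : negCount (canon m) = m := by
  interval_cases m <;> decide

lemma toCanon (x : Fin 7 → Bool) :
    Relation.EqvGen cremonaStep x (canon (negCount x)) :=
  Relation.EqvGen.rel _ _
    (Or.inl (exists_perm x _ ((negCount_canon _ (negCount_le x)).symm)))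

lemma edge (m m' : ℕ) (hm' : m' ≤ 7) (v : Fin 7 → Bool)
    (h1 : cremonaStep (canon m) v) (h2 : negCount v = m') :
    Relation.EqvGen cremonaStep (canon m) (canon m') := by
  refine Relation.EqvGen.trans _ _ _ (Relation.EqvGen.rel _ _ h1) ?_
  have := toCanon v
  rwa [h2] at this

lemma e15 : Relation.EqvGen cremonaStep (canon 1) (canon 5) := by
  refine edge 1 5 (by norm_num) ![true,false,false,true,true,true,true] ?_ (by decide)
  refine Or.inr ⟨{0,1,2}, by decide, ?_⟩
  funext j; fin_cases j <;> decide

lemma e24 : Relation.EqvGen cremonaStep (canon 2) (canon 4) := by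
  refine edge 2 4 (by norm_num) ![true,false,false,false,true,true,true] ?_ (by decide)
  refine Or.inr ⟨{0,2,3}, by decide, ?_⟩
  funext j; fin_cases j <;> decide

lemma e46 : Relation.EqvGen cremonaStep (canon 4) (canon 6) := by
  refine edge 4 6 (by norm_num) ![true,true,true,false,true,true,true] ?_ (by decide)
  refine Or.inr ⟨{0,1,2}, by decide, ?_⟩
  funext j; fin_cases j <;> decide

lemma e37 : Relation.EqvGen cremonaStep (canon 3) (canon 7) := by
  refine edge 3 7 (by norm_num) ![true,true,true,true,true,true,true] ?_ (by decide)
  refine Or.inr ⟨{0,1,2}, by decide, ?_⟩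
  funext j; fin_cases j <;> decide

lemma conn (m m' : ℕ) (hm : m ≤ 7) (hm' : m' ≤ 7) (h : block m = block m') :
    Relation.EqvGen cremonaStep (canon m) (canon m') := by
  have e26 : Relation.EqvGen cremonaStep (canon 2) (canon 6) :=
    Relation.EqvGen.trans _ _ _ e24 e46
  interval_cases m <;> interval_cases m' <;>
    first
      | exact Relation.EqvGen.refl _
      | exact e15 | exact Relation.EqvGen.symm _ _ e15
      | exact e24 | exact Relation.EqvGen.symm _ _ e24
      | exact e46 | exact Relation.EqvGen.symm _ _ e46
      | exact e26 | exact Relation.EqvGen.symm _ _ e26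
      | exact e37 | exact Relation.EqvGen.symm _ _ e37
      | exact absurd h (by decide)

/-- two sign vectors are related by the group generated by
permutations and Cremona moves iff their numbers of negative coordinates lie
in the same block of the partition {{0},{1,5},{2,4,6},{3,7}}; so the action on
pairs (m₊,m₋) with m₊+m₋ = 7 has exactly the 4 orbits
{(7,0)}, {(6,1),(2,5)}, {(5,2),(3,4),(1,6)}, {(4,3),(0,7)}. -/
theorem cremona_sign_orbits (x y : Fin 7 → Bool) :
    Relation.EqvGen cremonaStep x y ↔ block (negCount x) = block (negCount y) := by
  constructor
  · intro h
    induction h with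
    | rel a b hab => exact block_invariant hab
    | refl a => rfl
    | symm a b _ ih => exact ih.symm
    | trans a b c _ _ ih1 ih2 => exact ih1.trans ih2
  · intro h
    refine Relation.EqvGen.trans _ _ _ (toCanon x) ?_
    refine Relation.EqvGen.trans _ _ _
      (conn (negCount x) (negCount y) (negCount_le x) (negCount_le y) h) ?_
    exact Relation.EqvGen.symm _ _ (toCanon y)
end
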